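/- arXiv:2210.00925 — 3 statements merged into one kernel-verified Lean document; each statement's English description precedes it below -/
import Mathlib

section
/- Fix real numbers L > 0 (an edge length), ℓ > 0 and m > 0. Define F(t) = 2·sinh²(L)·cosh(t·ℓ)·cosh(t·m) + cosh(t·ℓ − t·m) for t ∈ [0,1]. Then F is monotone nondecreasing on [0,1]; in particular F(t) ≤ F(1) for all t ∈ [0,1]. -/
private lemma cosh_mul_mono (c : ℝ) {s t : ℝ} (hs : 0 ≤ s) (hst : s ≤ t) :
    Real.cosh (s * c) ≤ Real.cosh (t * c) := by
  rw [Real.cosh_le_cosh, abs_mul, abs_mul, abs_of_nonneg hs,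
    abs_of_nonneg (hs.trans hst)]
  exact mul_le_mul_of_nonneg_right hst (abs_nonneg c)

private lemma decomp (L a b : ℝ) :
    2 * Real.sinh L ^ 2 * Real.cosh a * Real.cosh b + Real.cosh (a - b)
      = Real.sinh L ^ 2 * Real.cosh (a + b) + Real.cosh L ^ 2 * Real.cosh (a - b) := by
  have h : Real.cosh L ^ 2 = Real.sinh L ^ 2 + 1 := Real.cosh_sq L
  rw [Real.cosh_add, Real.cosh_sub]
  linear_combination (Real.sinh a * Real.sinh b - Real.cosh a * Real.cosh b) * h

theorem bridge_arc_monotone (L ℓ m : ℝ) (hL : 0 < L) (hℓ : 0 < ℓ) (hm : 0 < m) :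
    MonotoneOn
      (fun t : ℝ => 2 * Real.sinh L ^ 2 * Real.cosh (t * ℓ) * Real.cosh (t * m)
        + Real.cosh (t * ℓ - t * m)) (Set.Icc 0 1) ∧
    ∀ t ∈ Set.Icc (0 : ℝ) 1,
      2 * Real.sinh L ^ 2 * Real.cosh (t * ℓ) * Real.cosh (t * m)
        + Real.cosh (t * ℓ - t * m)
      ≤ 2 * Real.sinh L ^ 2 * Real.cosh ℓ * Real.cosh m + Real.cosh (ℓ - m) := by
  have key : ∀ s ∈ Set.Icc (0:ℝ) 1, ∀ t ∈ Set.Icc (0:ℝ) 1, s ≤ t →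
      2 * Real.sinh L ^ 2 * Real.cosh (s * ℓ) * Real.cosh (s * m)
        + Real.cosh (s * ℓ - s * m)
      ≤ 2 * Real.sinh L ^ 2 * Real.cosh (t * ℓ) * Real.cosh (t * m)
        + Real.cosh (t * ℓ - t * m) := by
    intro s hs t ht hst
    have h1 : s * ℓ + s * m = s * (ℓ + m) := by ring
    have h2 : s * ℓ - s * m = s * (ℓ - m) := by ring
    have h3 : t * ℓ + t * m = t * (ℓ + m) := by ring
    have h4 : t * ℓ - t * m = t * (ℓ - m) := by ring
    rw [decomp, decomp, h1, h2, h3, h4]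
    exact add_le_add
      (mul_le_mul_of_nonneg_left (cosh_mul_mono _ hs.1 hst) (sq_nonneg _))
      (mul_le_mul_of_nonneg_left (cosh_mul_mono _ hs.1 hst) (sq_nonneg _))
  constructor
  · intro s hs t ht hst
    exact key s hs t ht hst
  · intro t ht
    have := key t ht 1 (by constructor <;> norm_num) ht.2
    simpa using this
end

section
/- Define, for x > 0, ε_max(x) by sinh(ε_max(x)) = tanh(1) · tanh(½·arsinh(1/sinh x)) / cosh(x/2). Then ε_max is a strictly decreasing positive function on (0,∞), ε_max(x) < tanh 1 for all x, and the limit of e^{(3/2)·x}·ε_max(x) as x → ∞ exists and is a positive real number. -/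
/-- The maximal strip width `ε_max`, defined by
`sinh (ε_max x) = tanh 1 * tanh (Col x / 2) / cosh (x / 2)` where
`Col x = arsinh (1 / sinh x)` is the collar width. -/
noncomputable def epsMax (x : ℝ) : ℝ :=
  Real.arsinh (Real.tanh 1 * Real.tanh (Real.arsinh (1 / Real.sinh x) / 2) / Real.cosh (x / 2))

/-!
Write `ε_max = arsinh g` with `g x = tanh 1 · tanh (Col x / 2) / cosh (x / 2)`. Monotonicity and
the bounds are read off `g`: `Col` is positive and decreasing, `cosh (x / 2) ≥ 1` is increasing,
`tanh < 1` and `arsinh y < y` for `y > 0`. For the limit, chain asymptotic equivalences: `arsinh`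
and `tanh` are `∼ id` at `0`, while `sinh x` and `cosh x` are `∼ eˣ / 2` at `∞`; hence
`Col x / 2 ∼ e⁻ˣ`, `g x ∼ 2 tanh 1 · e^(-3x/2)`, and `ε_max x ∼ g x` since `g x → 0`.
-/

open Real Filter Topology Asymptotics

namespace Real

theorem tanh_strictMono : StrictMono tanh := fun a b hab => by
  have hmem : ∀ t, tanh t ∈ Set.Ioo (-1 : ℝ) 1 := fun t => ⟨neg_one_lt_tanh t, tanh_lt_one t⟩
  by_contra! h
  have := strictMonoOn_artanh.monotoneOn (hmem b) (hmem a) h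
  rw [artanh_tanh, artanh_tanh] at this
  linarith

theorem tanh_pos {x : ℝ} (hx : 0 < x) : 0 < tanh x := by
  simpa using tanh_strictMono hx

theorem arsinh_lt_self {x : ℝ} (hx : 0 < x) : arsinh x < x := by
  simpa using self_lt_sinh_iff.mpr (arsinh_pos_iff.mpr hx)

theorem isEquivalent_arsinh : arsinh ~[𝓝 0] id := by
  simpa using! (hasDerivAt_arsinh 0).isLittleO

theorem isEquivalent_tanh : tanh ~[𝓝 0] id := by
  have hcosh : (fun x => (cosh x)⁻¹) ~[𝓝 0] Function.const ℝ (1 : ℝ) :=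
    (isEquivalent_const_iff_tendsto one_ne_zero).mpr <| by
      simpa using (continuous_cosh.tendsto 0).inv₀ (by simp)
  convert isEquivalent_sinh.mul hcosh using 1 <;> funext x <;>
    simp [tanh_eq_sinh_div_cosh, div_eq_mul_inv]

theorem isEquivalent_sinh_atTop : sinh ~[atTop] fun x => exp x / 2 := by
  refine isEquivalent_of_tendsto_one ?_
  have : Tendsto (fun x : ℝ => 1 - exp (-(2 * x))) atTop (𝓝 1) := by
    simpa using tendsto_const_nhds.sub
      (tendsto_exp_neg_atTop_nhds_zero.comp (tendsto_id.const_mul_atTop two_pos))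
  refine this.congr fun x => ?_
  rw [Pi.div_apply, sinh_eq, show -(2 * x) = -x + -x by ring, exp_add, exp_neg]
  field_simp

theorem isEquivalent_cosh_atTop : cosh ~[atTop] fun x => exp x / 2 := by
  refine isEquivalent_of_tendsto_one ?_
  have : Tendsto (fun x : ℝ => 1 + exp (-(2 * x))) atTop (𝓝 1) := by
    simpa using tendsto_const_nhds.add
      (tendsto_exp_neg_atTop_nhds_zero.comp (tendsto_id.const_mul_atTop two_pos))
  refine this.congr fun x => ?_
  rw [Pi.div_apply, cosh_eq, show -(2 * x) = -x + -x by ring, exp_add, exp_neg]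
  field_simp

end Real

noncomputable def collarWidth (x : ℝ) : ℝ := arsinh (1 / sinh x)

theorem collarWidth_pos {x : ℝ} (hx : 0 < x) : 0 < collarWidth x :=
  arsinh_pos_iff.mpr (one_div_pos.mpr (sinh_pos_iff.mpr hx))

theorem collarWidth_strictAntiOn : StrictAntiOn collarWidth (Set.Ioi 0) := fun _ hx _ _ hxy =>
  arsinh_lt_arsinh.mpr (one_div_lt_one_div_of_lt (sinh_pos_iff.mpr hx) (sinh_lt_sinh.mpr hxy))

theorem isEquivalent_half_collarWidth :
    (fun x => collarWidth x / 2) ~[atTop] fun x => exp (-x) := by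
  have hinv : (fun x => 1 / sinh x) ~[atTop] fun x => 2 * exp (-x) := by
    convert isEquivalent_sinh_atTop.inv using 1 <;> funext x <;> simp [exp_neg, div_eq_mul_inv]
  have hlim : Tendsto (fun x => 1 / sinh x) atTop (𝓝 0) :=
    hinv.symm.tendsto_nhds (by simpa using tendsto_exp_neg_atTop_nhds_zero.const_mul 2)
  have hcollar := (isEquivalent_arsinh.comp_tendsto hlim).trans hinv
  convert hcollar.div (IsEquivalent.refl (u := fun _ => (2 : ℝ))) using 1 <;> funext x
  · rfl
  · simp

noncomputable def sinhEpsMax (x : ℝ) : ℝ := tanh 1 * tanh (collarWidth x / 2) / cosh (x / 2)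

theorem tanh_half_collarWidth_pos {x : ℝ} (hx : 0 < x) : 0 < tanh (collarWidth x / 2) :=
  tanh_pos (half_pos (collarWidth_pos hx))

theorem sinhEpsMax_pos {x : ℝ} (hx : 0 < x) : 0 < sinhEpsMax x :=
  div_pos (mul_pos (tanh_pos one_pos) (tanh_half_collarWidth_pos hx)) (cosh_pos _)

theorem sinhEpsMax_strictAntiOn : StrictAntiOn sinhEpsMax (Set.Ioi 0) := by
  intro x hx y hy hxy
  rw [Set.mem_Ioi] at hx hy
  have hnum : tanh 1 * tanh (collarWidth y / 2) < tanh 1 * tanh (collarWidth x / 2) :=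
    mul_lt_mul_of_pos_left (tanh_strictMono (by linarith [collarWidth_strictAntiOn hx hy hxy]))
      (tanh_pos one_pos)
  have hcosh : cosh (x / 2) < cosh (y / 2) :=
    cosh_strictMonoOn (Set.mem_Ici.mpr (by positivity)) (Set.mem_Ici.mpr (by positivity))
      (by linarith)
  exact div_lt_div₀ hnum hcosh.le
    (mul_pos (tanh_pos one_pos) (tanh_half_collarWidth_pos hx)).le (cosh_pos _)

theorem sinhEpsMax_lt_tanh_one {x : ℝ} (hx : 0 < x) : sinhEpsMax x < tanh 1 :=
  calc sinhEpsMax x ≤ tanh 1 * tanh (collarWidth x / 2) :=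
        div_le_self (mul_pos (tanh_pos one_pos) (tanh_half_collarWidth_pos hx)).le
          (one_le_cosh _)
    _ < tanh 1 := mul_lt_of_lt_one_right (tanh_pos one_pos) (tanh_lt_one _)

theorem isEquivalent_sinhEpsMax :
    sinhEpsMax ~[atTop] fun x => 2 * tanh 1 * exp (-(3 / 2 * x)) := by
  have hcosh : (fun x => cosh (x / 2)) ~[atTop] fun x => exp (x / 2) / 2 :=
    isEquivalent_cosh_atTop.comp_tendsto (tendsto_id.atTop_div_const two_pos)
  have hlim : Tendsto (fun x => collarWidth x / 2) atTop (𝓝 0) :=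
    isEquivalent_half_collarWidth.symm.tendsto_nhds tendsto_exp_neg_atTop_nhds_zero
  have htanh := (isEquivalent_tanh.comp_tendsto hlim).trans isEquivalent_half_collarWidth
  convert ((IsEquivalent.refl (u := fun _ => tanh 1)).mul htanh).div hcosh using 1 <;> funext x
  · rfl
  · simp only [Pi.div_apply, Pi.mul_apply]
    rw [show -(3 / 2 * x) = -x - x / 2 by ring, exp_sub]
    field_simp

theorem epsMax_eq_arsinh_sinhEpsMax (x : ℝ) : epsMax x = arsinh (sinhEpsMax x) := rfl

theorem epsMax_pos {x : ℝ} (hx : 0 < x) : 0 < epsMax x := by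
  rw [epsMax_eq_arsinh_sinhEpsMax]
  exact arsinh_pos_iff.mpr (sinhEpsMax_pos hx)

theorem epsMax_lt_tanh_one {x : ℝ} (hx : 0 < x) : epsMax x < tanh 1 := by
  rw [epsMax_eq_arsinh_sinhEpsMax]
  exact (arsinh_lt_self (sinhEpsMax_pos hx)).trans (sinhEpsMax_lt_tanh_one hx)

theorem epsMax_strictAntiOn : StrictAntiOn epsMax (Set.Ioi 0) := fun x hx y hy hxy => by
  simp only [epsMax_eq_arsinh_sinhEpsMax]
  exact arsinh_lt_arsinh.mpr (sinhEpsMax_strictAntiOn hx hy hxy)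

theorem isEquivalent_epsMax :
    epsMax ~[atTop] fun x => 2 * tanh 1 * exp (-(3 / 2 * x)) := by
  have hlim : Tendsto sinhEpsMax atTop (𝓝 0) :=
    isEquivalent_sinhEpsMax.symm.tendsto_nhds <| by
      simpa using (tendsto_exp_neg_atTop_nhds_zero.comp
        (tendsto_id.const_mul_atTop (by norm_num : (0 : ℝ) < 3 / 2))).const_mul (2 * tanh 1)
  exact (isEquivalent_arsinh.comp_tendsto hlim).trans isEquivalent_sinhEpsMax

theorem tendsto_exp_mul_epsMax :
    Tendsto (fun x => exp (3 / 2 * x) * epsMax x) atTop (𝓝 (2 * tanh 1)) := by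
  have h := (IsEquivalent.refl (u := fun x => exp (3 / 2 * x))).mul isEquivalent_epsMax
  refine h.symm.tendsto_nhds (tendsto_const_nhds.congr fun x => ?_)
  rw [Pi.mul_apply, mul_left_comm, ← exp_add, add_neg_cancel, exp_zero, mul_one]

theorem epsMax_properties :
    StrictAntiOn epsMax (Set.Ioi 0) ∧
    (∀ x : ℝ, 0 < x → 0 < epsMax x) ∧
    (∀ x : ℝ, 0 < x → epsMax x < Real.tanh 1) ∧
    ∃ L : ℝ, 0 < L ∧
      Filter.Tendsto (fun x : ℝ => Real.exp (3 / 2 * x) * epsMax x)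
        Filter.atTop (nhds L) :=
  ⟨epsMax_strictAntiOn, fun _ => epsMax_pos, fun _ => epsMax_lt_tanh_one,
    2 * tanh 1, mul_pos two_pos (tanh_pos one_pos), tendsto_exp_mul_epsMax⟩
end

section
/- Suppose positive reals a, g, s, L satisfy sinh(L/2) = cosh(g/2)/sinh(a) and a ≥ s. Then L ≤ 2·log(2·cosh(a)·cosh(g/2)) + 2·arsinh(1/sinh(2s)). -/
open Real

lemma arsinh_mul_le (c x : ℝ) (hc : 1 ≤ c) (hx : 0 ≤ x) :
    Real.arsinh (c * x) ≤ Real.log c + Real.arsinh x := by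
  have hc0 : 0 < c := lt_of_lt_of_le one_pos hc
  rw [Real.arsinh, Real.arsinh, ← Real.log_mul (ne_of_gt hc0)]
  · apply Real.log_le_log (by positivity)
    have hsq : Real.sqrt (1 + (c * x) ^ 2) ≤ c * Real.sqrt (1 + x ^ 2) := by
      rw [show c * Real.sqrt (1 + x ^ 2) = Real.sqrt (c ^ 2 * (1 + x ^ 2)) by
        rw [Real.sqrt_mul (by positivity), Real.sqrt_sq hc0.le]]
      apply Real.sqrt_le_sqrt
      nlinarith [sq_nonneg c, sq_nonneg x]
    calc c * x + Real.sqrt (1 + (c * x) ^ 2)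
        ≤ c * x + c * Real.sqrt (1 + x ^ 2) := by linarith
      _ = c * (x + Real.sqrt (1 + x ^ 2)) := by ring
  · positivity

theorem pentagon_length_bound (a g s L : ℝ) (ha : 0 < a) (hg : 0 < g) (hs : 0 < s)
    (hL : 0 < L) (hpent : Real.sinh (L / 2) = Real.cosh (g / 2) / Real.sinh a)
    (has : a ≥ s) :
    L ≤ 2 * Real.log (2 * Real.cosh a * Real.cosh (g / 2)) +
      2 * Real.arsinh (1 / Real.sinh (2 * s)) := by
  have hsa : 0 < Real.sinh a := Real.sinh_pos_iff.2 ha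
  have hs2a : 0 < Real.sinh (2 * a) := Real.sinh_pos_iff.2 (by linarith)
  have hs2s : 0 < Real.sinh (2 * s) := Real.sinh_pos_iff.2 (by linarith)
  have hca : 1 ≤ Real.cosh a := Real.one_le_cosh a
  have hcg : 1 ≤ Real.cosh (g / 2) := Real.one_le_cosh _
  have key : Real.cosh (g / 2) / Real.sinh a
      = (2 * Real.cosh a * Real.cosh (g / 2)) * (1 / Real.sinh (2 * a)) := by
    rw [Real.sinh_two_mul]
    field_simp
  have hL2 : L / 2 = Real.arsinh ((2 * Real.cosh a * Real.cosh (g / 2)) * (1 / Real.sinh (2 * a))) := by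
    rw [← key, ← hpent, Real.arsinh_sinh]
  have h1 : L / 2 ≤ Real.log (2 * Real.cosh a * Real.cosh (g / 2))
      + Real.arsinh (1 / Real.sinh (2 * a)) := by
    rw [hL2]
    exact arsinh_mul_le _ _ (by nlinarith) (by positivity)
  have h2 : Real.arsinh (1 / Real.sinh (2 * a)) ≤ Real.arsinh (1 / Real.sinh (2 * s)) := by
    apply Real.arsinh_le_arsinh.2
    apply one_div_le_one_div_of_le hs2s
    exact Real.sinh_le_sinh.2 (by linarith)
  linarith
end
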